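/- arXiv:0707.0556 — 2 statements merged into one kernel-verified Lean document; each statement's English description precedes it below -/
import Mathlib

section
/- A w-bisimulation up to w-bisimilarity is contained in w-bisimilarity: if R is symmetric and whenever R p q and weak-step p α p' there exists q' with weak-step q α q' and p' (≈ ∘ R ∘ ≈) q', then R ⊆ ≈. -/
/-- Reflexive-transitive closure of τ-steps. -/
def TauStar {P A : Type} (step : P → A → P → Prop) (τ : A) : P → P → Prop :=
  Relation.ReflTransGen (fun p q => step p τ q)

/-- Weak step: τ*-closure for τ, and τ* ∘ step α ∘ τ* otherwise. -/
def Weak {P A : Type} (step : P → A → P → Prop) (τ : A) (α : A) (p q : P) : Prop :=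
  (α = τ ∧ TauStar step τ p q) ∨
  (α ≠ τ ∧ ∃ a b, TauStar step τ p a ∧ step a α b ∧ TauStar step τ b q)

/-- Labelled bisimulation: symmetric, strong challenge, weak response. -/
def IsBisim {P A : Type} (step : P → A → P → Prop) (τ : A) (R : P → P → Prop) : Prop :=
  Symmetric R ∧
  ∀ p q α p', R p q → step p α p' → ∃ q', Weak step τ α q q' ∧ R p' q'

/-- Weak bisimilarity: the union of all bisimulations. -/
def Bisim {P A : Type} (step : P → A → P → Prop) (τ : A) (p q : P) : Prop :=
  ∃ R, IsBisim step τ R ∧ R p q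

/-- A derivative: reachable by finitely many weak steps. -/
def Deriv {P A : Type} (step : P → A → P → Prop) (τ : A) : P → P → Prop :=
  Relation.ReflTransGen (fun a b => ∃ α, Weak step τ α a b)

/-- w-bisimulation: both challenge and response are weak. -/
def IsWBisim {P A : Type} (step : P → A → P → Prop) (τ : A) (R : P → P → Prop) : Prop :=
  Symmetric R ∧
  ∀ p q α p', R p q → Weak step τ α p p' → ∃ q', Weak step τ α q q' ∧ R p' q'

/-- w-bisimilarity: the union of all w-bisimulations. -/
def WBisim {P A : Type} (step : P → A → P → Prop) (τ : A) (p q : P) : Prop :=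
  ∃ R, IsWBisim step τ R ∧ R p q

namespace WBisim

variable {P A : Type} {step : P → A → P → Prop} {τ : A}

theorem refl (p : P) : WBisim step τ p p :=
  ⟨Eq, ⟨fun _ _ h => h.symm, fun _ _ _ p' h hs => ⟨p', h ▸ hs, rfl⟩⟩, rfl⟩

theorem symm {p q : P} (h : WBisim step τ p q) : WBisim step τ q p :=
  let ⟨R, hR, hpq⟩ := h
  ⟨R, hR, hR.1 hpq⟩

theorem exists_weak {α : A} {p q p' : P} (h : WBisim step τ p q) (hs : Weak step τ α p p') :
    ∃ q', Weak step τ α q q' ∧ WBisim step τ p' q' :=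
  let ⟨R, hR, hpq⟩ := h
  let ⟨q', hq', hpq'⟩ := hR.2 p q α p' hpq hs
  ⟨q', hq', R, hR, hpq'⟩

theorem trans {p q r : P} (hpq : WBisim step τ p q) (hqr : WBisim step τ q r) :
    WBisim step τ p r := by
  refine ⟨Relation.Comp (WBisim step τ) (WBisim step τ), ⟨?_, ?_⟩, q, hpq, hqr⟩
  · rintro a b ⟨c, hac, hcb⟩
    exact ⟨c, hcb.symm, hac.symm⟩
  · rintro a b α a' ⟨c, hac, hcb⟩ hs
    obtain ⟨c', hc', hac'⟩ := hac.exists_weak hs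
    obtain ⟨b', hb', hcb'⟩ := hcb.exists_weak hc'
    exact ⟨b', hb', c', hac', hcb'⟩

end WBisim

section UpTo

variable {P A : Type} {step : P → A → P → Prop} {τ : A} {R : P → P → Prop}

def UpToWBisim (step : P → A → P → Prop) (τ : A) (R : P → P → Prop) (p q : P) : Prop :=
  ∃ a b, WBisim step τ p a ∧ R a b ∧ WBisim step τ b q

theorem UpToWBisim.of_rel {p q : P} (h : R p q) : UpToWBisim step τ R p q :=
  ⟨p, q, .refl p, h, .refl q⟩

theorem UpToWBisim.symmetric (hsym : Symmetric R) : Symmetric (UpToWBisim step τ R) :=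
  fun _ _ ⟨a, b, hpa, hab, hbq⟩ => ⟨b, a, hbq.symm, hsym hab, hpa.symm⟩

/-- Transitivity of `≈` absorbs the bisimilarity steps taken on either side of `R`. -/
theorem isWBisim_upToWBisim (hsym : Symmetric R)
    (hupto : ∀ p q α p', R p q → Weak step τ α p p' →
      ∃ q', Weak step τ α q q' ∧ UpToWBisim step τ R p' q') :
    IsWBisim step τ (UpToWBisim step τ R) := by
  refine ⟨UpToWBisim.symmetric hsym, ?_⟩
  rintro p q α p' ⟨a, b, hpa, hab, hbq⟩ hs
  obtain ⟨a', ha', hpa'⟩ := hpa.exists_weak hs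
  obtain ⟨b', hb', c, d, ha'c, hcd, hdb'⟩ := hupto a b α a' hab ha'
  obtain ⟨q', hq', hb'q'⟩ := hbq.exists_weak hb'
  exact ⟨q', hq', c, d, hpa'.trans ha'c, hcd, hdb'.trans hb'q'⟩

end UpTo

/-- A w-bisimulation up to w-bisimilarity is contained in w-bisimilarity. -/
theorem wbisim_up_to_wbisim {P A : Type} (step : P → A → P → Prop) (τ : A)
    (R : P → P → Prop) (hsym : Symmetric R)
    (hupto : ∀ p q α p', R p q → Weak step τ α p p' →
      ∃ q', Weak step τ α q q' ∧
        ∃ a b, WBisim step τ p' a ∧ R a b ∧ WBisim step τ b q') :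
    ∀ p q, R p q → WBisim step τ p q :=
  fun _ _ hpq => ⟨_, isWBisim_upToWBisim hsym hupto, .of_rel hpq⟩
end

section
/- If p is confluent and τ-inert, then bisimilar derivatives stay bisimilar after matching weak moves: whenever p₁ ≈ p₂ are derivatives of p, p₁ ⟹α p₃, and p₂ ⟹α p₄, then p₃ ≈ p₄. -/
/-- Confluence: all compatible weak steps from any derivative can be closed
up to residuals and bisimilarity. -/
def Confluent {P A : Type} (step : P → A → P → Prop) (τ : A)
    (compat : A → A → Prop) (res : A → A → A) (p : P) : Prop :=
  ∀ q, Deriv step τ p q → ∀ α β q₁ q₂, compat α β →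
    Weak step τ α q q₁ → Weak step τ β q q₂ →
    ∃ q₃ q₄, Weak step τ (res β α) q₁ q₃ ∧ Weak step τ (res α β) q₂ q₄ ∧
      Bisim step τ q₃ q₄


section WeakBisimilarity

variable {P A : Type} {step : P → A → P → Prop} {τ : A}

theorem weak_tau_iff_tauStar {p q : P} : Weak step τ τ p q ↔ TauStar step τ p q :=
  ⟨fun h => h.elim And.right fun h => absurd rfl h.1, fun h => Or.inl ⟨rfl, h⟩⟩

theorem Weak.tauStar_left {α : A} {p q r : P} (h : TauStar step τ p q)
    (h' : Weak step τ α q r) : Weak step τ α p r := by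
  rcases h' with ⟨hα, h'⟩ | ⟨hα, a, b, hqa, hab, hbr⟩
  · exact Or.inl ⟨hα, h.trans h'⟩
  · exact Or.inr ⟨hα, a, b, h.trans hqa, hab, hbr⟩

theorem Weak.tauStar_right {α : A} {p q r : P} (h : Weak step τ α p q)
    (h' : TauStar step τ q r) : Weak step τ α p r := by
  rcases h with ⟨hα, h⟩ | ⟨hα, a, b, hpa, hab, hbq⟩
  · exact Or.inl ⟨hα, h.trans h'⟩
  · exact Or.inr ⟨hα, a, b, hpa, hab, hbq.trans h'⟩

theorem IsBisim.exists_tauStar {R : P → P → Prop} (hR : IsBisim step τ R)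
    {p p' q : P} (h : TauStar step τ p p') (hpq : R p q) :
    ∃ q', TauStar step τ q q' ∧ R p' q' := by
  induction h with
  | refl => exact ⟨q, .refl, hpq⟩
  | tail _ hstep ih =>
    obtain ⟨q', hqq', hR'⟩ := ih
    obtain ⟨q'', hq'q'', hR''⟩ := hR.2 _ _ _ _ hR' hstep
    exact ⟨q'', hqq'.trans (weak_tau_iff_tauStar.1 hq'q''), hR''⟩

theorem IsBisim.exists_weak {R : P → P → Prop} (hR : IsBisim step τ R)
    {α : A} {p p' q : P} (h : Weak step τ α p p') (hpq : R p q) :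
    ∃ q', Weak step τ α q q' ∧ R p' q' := by
  rcases h with ⟨hα, h⟩ | ⟨hα, a, b, hpa, hab, hbp'⟩
  · obtain ⟨q', hqq', hR'⟩ := hR.exists_tauStar h hpq
    exact ⟨q', Or.inl ⟨hα, hqq'⟩, hR'⟩
  · obtain ⟨qa, hqqa, hRa⟩ := hR.exists_tauStar hpa hpq
    obtain ⟨qb, hqaqb, hRb⟩ := hR.2 _ _ _ _ hRa hab
    obtain ⟨q', hqbq', hR'⟩ := hR.exists_tauStar hbp' hRb
    exact ⟨q', (hqaqb.tauStar_left hqqa).tauStar_right hqbq', hR'⟩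

theorem Bisim.symm {p q : P} (h : Bisim step τ p q) : Bisim step τ q p :=
  let ⟨_, hR, hpq⟩ := h
  ⟨_, hR, hR.1 hpq⟩

theorem IsBisim.relComp {R₁ R₂ : P → P → Prop} (hR₁ : IsBisim step τ R₁)
    (hR₂ : IsBisim step τ R₂) {x z x' : P} {α : A} (hxz : Relation.Comp R₁ R₂ x z)
    (hstep : step x α x') : ∃ z', Weak step τ α z z' ∧ Relation.Comp R₁ R₂ x' z' := by
  obtain ⟨y, hxy, hyz⟩ := hxz
  obtain ⟨y', hyy', hx'y'⟩ := hR₁.2 _ _ _ _ hxy hstep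
  obtain ⟨z', hzz', hy'z'⟩ := hR₂.exists_weak hyy' hyz
  exact ⟨z', hzz', y', hx'y', hy'z'⟩

/-- The composite of two bisimulations is made symmetric by adding the reverse composite. -/
theorem Bisim.trans {p q r : P} (h : Bisim step τ p q) (h' : Bisim step τ q r) :
    Bisim step τ p r := by
  obtain ⟨R₁, hR₁, hpq⟩ := h
  obtain ⟨R₂, hR₂, hqr⟩ := h'
  refine ⟨fun x z => Relation.Comp R₁ R₂ x z ∨ Relation.Comp R₂ R₁ x z,
    ⟨?_, ?_⟩, Or.inl ⟨q, hpq, hqr⟩⟩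
  · rintro x z (⟨y, hxy, hyz⟩ | ⟨y, hxy, hyz⟩)
    · exact Or.inr ⟨y, hR₂.1 hyz, hR₁.1 hxy⟩
    · exact Or.inl ⟨y, hR₁.1 hyz, hR₂.1 hxy⟩
  · rintro x z α x' (hxz | hxz) hstep
    · obtain ⟨z', hzz', hx'z'⟩ := hR₁.relComp hR₂ hxz hstep
      exact ⟨z', hzz', Or.inl hx'z'⟩
    · obtain ⟨z', hzz', hx'z'⟩ := hR₂.relComp hR₁ hxz hstep
      exact ⟨z', hzz', Or.inr hx'z'⟩

theorem Deriv.tail_weak {p q r : P} {α : A} (hq : Deriv step τ p q)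
    (h : Weak step τ α q r) : Deriv step τ p r :=
  hq.tail ⟨α, h⟩

/-- Closing two equal weak moves by confluence leaves only τ-steps, which inertness absorbs. -/
theorem Confluent.bisim_of_weak_of_weak {compat : A → A → Prop} {res : A → A → A}
    (hrefl : ∀ α, compat α α) (hres_self : ∀ α, res α α = τ) {p : P}
    (hconf : Confluent step τ compat res p)
    (hinert : ∀ q q', Deriv step τ p q → Weak step τ τ q q' → Bisim step τ q q')
    {α : A} {q q₁ q₂ : P} (hq : Deriv step τ p q)
    (h₁ : Weak step τ α q q₁) (h₂ : Weak step τ α q q₂) : Bisim step τ q₁ q₂ := by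
  obtain ⟨q₃, q₄, h₁₃, h₂₄, h₃₄⟩ := hconf q hq α α q₁ q₂ (hrefl α) h₁ h₂
  rw [hres_self] at h₁₃ h₂₄
  exact ((hinert _ _ (hq.tail_weak h₁) h₁₃).trans h₃₄).trans
    (hinert _ _ (hq.tail_weak h₂) h₂₄).symm

end WeakBisimilarity

/-- For a confluent, τ-inert process, bisimilar derivatives stay bisimilar
after matching weak moves. -/
theorem bisim_preserved_after_matching_moves {P A : Type}
    (step : P → A → P → Prop) (τ : A)
    (compat : A → A → Prop) (res : A → A → A)
    (hrefl : ∀ α, compat α α)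
    (hres_self : ∀ α, res α α = τ)
    (p : P)
    (hconf : Confluent step τ compat res p)
    (hinert : ∀ q q', Deriv step τ p q → Weak step τ τ q q' → Bisim step τ q q') :
    ∀ α p₁ p₂ p₃ p₄, Deriv step τ p p₁ → Deriv step τ p p₂ →
      Bisim step τ p₁ p₂ → Weak step τ α p₁ p₃ → Weak step τ α p₂ p₄ →
      Bisim step τ p₃ p₄ := by
  intro α p₁ p₂ p₃ p₄ _ hd₂ ⟨R, hR, h₁₂⟩ h₁₃ h₂₄
  obtain ⟨p₅, h₂₅, h₃₅⟩ := hR.exists_weak h₁₃ h₁₂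
  exact Bisim.trans ⟨R, hR, h₃₅⟩
    (Confluent.bisim_of_weak_of_weak hrefl hres_self hconf hinert hd₂ h₂₅ h₂₄)
end
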